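/- arXiv:2107.13123 — 2 statements merged into one kernel-verified Lean document; each statement's English description precedes it below -/
import Mathlib

section
/- Let W be an n-letter square-free word, let L ≥ 300 be an integer, let x be an integer, and let ℬ be a set of square-completing quadruples (a, ℓ, b, c) in W, no two of which share the same pair (b, c), such that every quadruple in ℬ has sign 1, length parameter ℓ satisfying L ≤ ℓ < 7L/6, and starting index a satisfying x ≤ a < x + L/6. Then |ℬ| ≤ 7. The same bound holds if every quadruple in ℬ has sign −1 instead. -/
/-!
Read back in `W`, a square completed by inserting `c` at gap `b` says that the first half of the
square has period `ℓ - 1` on one side of the inserted letter and period `ℓ` on the other (which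
side depends on the sign), and that `c` is the letter facing the insertion in the other half. In a
square-free word no stretch carries two periods `p < p'` over a length `p' - p`.

If two quadruples had lengths differing by at least `2`, their first halves would overlap on
almost `5L/6` positions; removing the two insertion points leaves a stretch of length about `5L/18`
carrying two periods that differ by at least `1` and by less than `L/6 + 2`. So the lengths take
at most two consecutive values. For a fixed length, comparing the two periods at a single position
shows that the gaps `b` of the quadruples whose inserted letter is not an end letter of the square
lie within distance one of each other, and gluing two runs of period `ℓ` shows that insertions at
an end all use the same gap. Since the length and the gap determine the letter, and the pair
`(b, c)` determines the quadruple, each length carries at most three quadruples.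
-/

/-- A word is square-free if it contains no factor of the form `X ++ X` with `X` nonempty. -/
def SquareFree {α : Type*} (W : List α) : Prop :=
  ∀ X : List α, X ≠ [] → ¬ (X ++ X) <:+: W

/-- `W'` is an extension of `W` if it is obtained by inserting a single letter into `W`. -/
def IsExtension {α : Type*} (W W' : List α) : Prop :=
  ∃ (W₁ W₂ : List α) (x : α), W = W₁ ++ W₂ ∧ W' = W₁ ++ [x] ++ W₂

/-- A square-free word is extremal square-free if none of its extensions is square-free. -/
def ExtremalSquareFree {α : Type*} (W : List α) : Prop :=
  SquareFree W ∧ ∀ W', IsExtension W W' → ¬ SquareFree W'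
/-- The factor `W[a, b)` of `W`, consisting of the letters `a, a+1, …, b-1`
(letters are numbered from 1). -/
def factor {α : Type*} (W : List α) (a b : ℕ) : List α :=
  (W.drop (a - 1)).take (b - a)

/-- The quadruple `(a, ℓ, b, c)` is square-completing in `W` if, in the word `W +_b c`
obtained by inserting the letter `c` at gap `b` of `W`, the factors `[a, a+ℓ)` and
`[a+ℓ, a+2ℓ)` are equal (so they form a square of length `2ℓ`). -/
def SquareCompleting {α : Type*} (W : List α) (a ℓ b : ℕ) (c : α) : Prop :=
  1 ≤ a ∧ 1 ≤ ℓ ∧ a ≤ b + 1 ∧ b ≤ W.length ∧ a + 2 * ℓ ≤ W.length + 2 ∧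
    factor (W.insertIdx b c) a (a + ℓ) = factor (W.insertIdx b c) (a + ℓ) (a + 2 * ℓ)

/-- The sign of a square-completing quadruple: `1` if `b ≤ a + ℓ - 2`
(the inserted letter lies in the first half of the square), and `-1` if `b ≥ a + ℓ - 1`. -/
def scSign (a ℓ b : ℕ) : ℤ :=
  if b + 2 ≤ a + ℓ then 1 else -1

theorem Finset.card_le_two_of_injOn {ι : Type*} {s : Finset ι} {g : ι → ℕ}
    (hg : Set.InjOn g s) (hclose : ∀ i ∈ s, ∀ j ∈ s, g j ≤ g i + 1) : s.card ≤ 2 := by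
  rcases s.eq_empty_or_nonempty with rfl | hs
  · simp
  obtain ⟨i₀, hi₀, hmin⟩ := s.exists_min_image g hs
  calc s.card ≤ (Finset.Icc (g i₀) (g i₀ + 1)).card :=
        Finset.card_le_card_of_injOn g
          (fun i hi => Finset.mem_Icc.2 ⟨hmin i hi, hclose i₀ hi₀ i hi⟩) hg
    _ = 2 := by simp only [Nat.card_Icc]; omega

theorem Finset.card_le_six_of_levels {ι : Type*} (s : Finset ι) (f g : ι → ℕ) (P : ι → Prop)
    (hf : ∀ i ∈ s, ∀ j ∈ s, f j ≤ f i + 1)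
    (hg : ∀ i ∈ s, ∀ j ∈ s, f i = f j → g i = g j → i = j)
    (hP : ∀ i ∈ s, ∀ j ∈ s, f i = f j → P i → P j → g i = g j)
    (hnP : ∀ i ∈ s, ∀ j ∈ s, f i = f j → ¬ P i → ¬ P j → g j ≤ g i + 1) :
    s.card ≤ 6 := by
  classical
  have hlevel : ∀ v, (s.filter (f · = v)).card ≤ 3 := by
    intro v
    have hon : ((s.filter (f · = v)).filter P).card ≤ 1 := Finset.card_le_one.2 fun i hi j hj => by
      simp only [Finset.mem_filter] at hi hj
      exact hg i hi.1.1 j hj.1.1 (hi.1.2.trans hj.1.2.symm)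
        (hP i hi.1.1 j hj.1.1 (hi.1.2.trans hj.1.2.symm) hi.2 hj.2)
    have hoff : ((s.filter (f · = v)).filter (¬ P ·)).card ≤ 2 :=
      Finset.card_le_two_of_injOn
        (fun i hi j hj => by
          simp only [Finset.coe_filter, Set.mem_ofPred_eq, Finset.mem_filter] at hi hj
          exact hg i hi.1.1 j hj.1.1 (hi.1.2.trans hj.1.2.symm))
        fun i hi j hj => by
          simp only [Finset.mem_filter] at hi hj
          exact hnP i hi.1.1 j hj.1.1 (hi.1.2.trans hj.1.2.symm) hi.2 hj.2
    rw [← Finset.card_filter_add_card_filter_not P]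
    omega
  calc s.card ≤ 3 * (s.image f).card := Finset.card_le_mul_card_image s 3 fun v _ => hlevel v
    _ ≤ 3 * 2 := by
      gcongr
      refine Finset.card_le_two_of_injOn (g := id) (Set.injOn_id _) fun v hv w hw => ?_
      obtain ⟨i, hi, rfl⟩ := Finset.mem_image.1 hv
      obtain ⟨j, hj, rfl⟩ := Finset.mem_image.1 hw
      exact hf i hi j hj

section SquareCompletion

variable {α : Type*}

/-- Positions are 0-indexed (position `i` is letter `i + 1` of `W`), and the condition is vacuous
past the end of `W`. -/
def HasPeriodOn (W : List α) (p s e : ℕ) : Prop :=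
  ∀ i, s ≤ i → i < e → W[i]? = W[i + p]?

section Periods

variable {W : List α} {p p' s e : ℕ}

theorem HasPeriodOn.mono {s' e' : ℕ} (h : HasPeriodOn W p s e) (hs : s ≤ s') (he : e' ≤ e) :
    HasPeriodOn W p s' e' :=
  fun i hi hi' => h i (hs.trans hi) (hi'.trans_le he)

theorem HasPeriodOn.add_lt_length (h : HasPeriodOn W p s e) (hse : s < e) (hs : s < W.length) :
    s + p < W.length := by
  have hsome := h s le_rfl hse
  rw [List.getElem?_eq_getElem hs] at hsome
  exact (List.getElem?_eq_some_iff.mp hsome.symm).1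

theorem SquareFree.not_hasPeriodOn (hW : SquareFree W) (hp : 0 < p) (hs : s < W.length) :
    ¬ HasPeriodOn W p s (s + p) := by
  intro h
  have hsp := h.add_lt_length (by omega) hs
  have hXlen : ((W.drop s).take p).length = p := by
    simp only [List.length_take, List.length_drop]; omega
  have hXX : (W.drop s).take p ++ (W.drop s).take p = (W.drop s).take (2 * p) := by
    refine List.ext_getElem? fun i => ?_
    rw [List.getElem?_append, hXlen]
    simp only [List.getElem?_take, List.getElem?_drop]
    by_cases hi : i < p
    · rw [if_pos hi, if_pos hi, if_pos (by omega)]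
    · by_cases hi' : i < 2 * p
      · rw [if_neg hi, if_pos (by omega), if_pos hi', h (s + (i - p)) (by omega) (by omega)]
        congr 1
        omega
      · rw [if_neg hi, if_neg (by omega), if_neg hi']
  refine hW ((W.drop s).take p) (fun hX0 => ?_) ?_
  · rw [hX0, List.length_nil] at hXlen
    omega
  · rw [hXX]
    exact (List.take_prefix _ _).isInfix.trans (List.drop_suffix _ _).isInfix

/-- Two periods `p < p'` on a run of length at least `p' - p` produce the period `p' - p` on a
run of length `p' - p`, hence a square. -/
theorem SquareFree.not_hasPeriodOn_of_hasPeriodOn (hW : SquareFree W) (h : HasPeriodOn W p s e)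
    (hpp : p < p') (he : s + (p' - p) ≤ e) (hs : s < W.length) : ¬ HasPeriodOn W p' s e := by
  intro h'
  refine hW.not_hasPeriodOn (p := p' - p) (s := s + p) (by omega)
    (h.add_lt_length (by omega) hs) fun i hi hi' => ?_
  have hleft := h (i - p) (by omega) (by omega)
  rw [Nat.sub_add_cancel (by omega)] at hleft
  rw [← hleft, h' (i - p) (by omega) (by omega)]
  congr 1
  omega

theorem exists_long_interval_avoiding (s e x y : ℕ) :
    ∃ s₀ e₀, s ≤ s₀ ∧ e₀ ≤ e ∧ (x < s₀ ∨ e₀ ≤ x) ∧ (y < s₀ ∨ e₀ ≤ y) ∧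
      e - s ≤ 3 * (e₀ - s₀) + 2 := by
  wlog hxy : x ≤ y generalizing x y
  · obtain ⟨s₀, e₀, hs, he, hy, hx, hlen⟩ := this y x (by omega)
    exact ⟨s₀, e₀, hs, he, hx, hy, hlen⟩
  by_contra! h
  have h₁ := h s (min x e) le_rfl (by omega) (by omega) (by omega)
  have h₂ := h (max s (x + 1)) (min y e) (by omega) (by omega) (by omega) (by omega)
  have h₃ := h (max s (y + 1)) e (by omega) le_rfl (by omega) (by omega)
  omega

/-- Cutting `[s, e)` at `β` and `β'` leaves a run of length at least `(e - s - 2) / 3` on which one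
of `p₁, p₂` and one of `p₁', p₂'` are both periods. -/
theorem SquareFree.false_of_split_periods (hW : SquareFree W) {β β' p₁ p₂ p₁' p₂' : ℕ}
    (h₁ : HasPeriodOn W p₁ s β) (h₂ : HasPeriodOn W p₂ (β + 1) e)
    (h₁' : HasPeriodOn W p₁' s β') (h₂' : HasPeriodOn W p₂' (β' + 1) e)
    (hlt : max p₁ p₂ < min p₁' p₂') (hlen : 3 * (max p₁' p₂' - min p₁ p₂) + 2 ≤ e - s)
    (he : e ≤ W.length) : False := by
  obtain ⟨s₀, e₀, hs₀, he₀, hβ, hβ', hlen₀⟩ := exists_long_interval_avoiding s e β β'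
  have key : ∀ q q', HasPeriodOn W q s₀ e₀ → HasPeriodOn W q' s₀ e₀ →
      min p₁ p₂ ≤ q → q < q' → q' ≤ max p₁' p₂' → False :=
    fun q q' h h' hq hqq hq' =>
      hW.not_hasPeriodOn_of_hasPeriodOn h hqq (by omega) (by omega) h'
  rcases hβ with hβ | hβ <;> rcases hβ' with hβ' | hβ'
  · exact key p₂ p₂' (h₂.mono hβ he₀) (h₂'.mono hβ' he₀) (by omega) (by omega) (by omega)
  · exact key p₂ p₁' (h₂.mono hβ he₀) (h₁'.mono hs₀ hβ') (by omega) (by omega) (by omega)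
  · exact key p₁ p₂' (h₁.mono hs₀ hβ) (h₂'.mono hβ' he₀) (by omega) (by omega) (by omega)
  · exact key p₁ p₁' (h₁.mono hs₀ hβ) (h₁'.mono hs₀ hβ') (by omega) (by omega) (by omega)

end Periods

section Insertion

variable {W : List α} {b : ℕ} {c : α} {p s e : ℕ}

theorem HasPeriodOn.of_insertIdx_before (h : HasPeriodOn (W.insertIdx b c) p s e)
    (he : e + p ≤ b) : HasPeriodOn W p s e := fun i hi hi' => by
  have := h i hi hi'
  rwa [List.getElem?_insertIdx_of_lt (by omega), List.getElem?_insertIdx_of_lt (by omega)] at this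

theorem HasPeriodOn.of_insertIdx_after (h : HasPeriodOn (W.insertIdx b c) p s e) (hb : b < s) :
    HasPeriodOn W p (s - 1) (e - 1) := fun i hi hi' => by
  have := h (i + 1) (by omega) (by omega)
  rwa [List.getElem?_insertIdx_of_gt (by omega), List.getElem?_insertIdx_of_gt (by omega),
    Nat.add_sub_cancel, show i + 1 + p - 1 = i + p by omega] at this

theorem HasPeriodOn.of_insertIdx_across (h : HasPeriodOn (W.insertIdx b c) p s e)
    (he : e ≤ b) (hb : b < s + p) : HasPeriodOn W (p - 1) s e := fun i hi hi' => by
  have := h i hi hi'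
  rwa [List.getElem?_insertIdx_of_lt (by omega), List.getElem?_insertIdx_of_gt (by omega),
    show i + p - 1 = i + (p - 1) by omega] at this

end Insertion

section SquareCompleting

variable {W : List α} {a ℓ b : ℕ} {c : α}

theorem SquareCompleting.hasPeriodOn (hq : SquareCompleting W a ℓ b c) :
    HasPeriodOn (W.insertIdx b c) ℓ (a - 1) (a - 1 + ℓ) := fun i hi hi' => by
  obtain ⟨ha, -, -, -, -, heq⟩ := hq
  have := congrArg (·[i - (a - 1)]?) heq
  simp only [factor, List.getElem?_take, List.getElem?_drop,
    show a + ℓ - a = ℓ by omega, show a + 2 * ℓ - (a + ℓ) = ℓ by omega,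
    if_pos (show i - (a - 1) < ℓ by omega)] at this
  rwa [show a - 1 + (i - (a - 1)) = i by omega,
    show a + ℓ - 1 + (i - (a - 1)) = i + ℓ by omega] at this

theorem SquareCompleting.pos_profile (hW : SquareFree W) (hq : SquareCompleting W a ℓ b c)
    (hℓ : 2 ≤ ℓ) (hσ : b + 2 ≤ a + ℓ) :
    b + 3 ≤ a + ℓ ∧ HasPeriodOn W (ℓ - 1) (a - 1) b ∧ HasPeriodOn W ℓ b (a + ℓ - 2) ∧
      W[b + ℓ - 1]? = some c := by
  have hV := hq.hasPeriodOn
  obtain ⟨ha, -, hab, hb, hlen, -⟩ := hq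
  have hleft : HasPeriodOn W (ℓ - 1) (a - 1) b :=
    (hV.mono le_rfl (by omega)).of_insertIdx_across le_rfl (by omega)
  refine ⟨?_, hleft, ?_, ?_⟩
  · by_contra! hb'
    exact hW.not_hasPeriodOn (by omega) (by omega) (hleft.mono le_rfl (by omega))
  · exact ((hV.mono (s' := b + 1) (by omega) le_rfl).of_insertIdx_after (by omega)).mono
      (by omega) (by omega)
  · have := hV b (by omega) (by omega)
    rwa [List.getElem?_insertIdx_self, if_pos hb, List.getElem?_insertIdx_of_gt (by omega),
      eq_comm] at this

theorem SquareCompleting.neg_profile (hW : SquareFree W) (hq : SquareCompleting W a ℓ b c)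
    (hℓ : 2 ≤ ℓ) (hσ : a + ℓ ≤ b + 1) :
    a + ℓ ≤ b ∧ b + 2 ≤ a + 2 * ℓ ∧ HasPeriodOn W ℓ (a - 1) (b - ℓ) ∧
      HasPeriodOn W (ℓ - 1) (b - ℓ + 1) (a + ℓ - 1) ∧ W[b - ℓ]? = some c := by
  have hV := hq.hasPeriodOn
  obtain ⟨ha, -, hab, hb, hlen, -⟩ := hq
  have hright : HasPeriodOn W (ℓ - 1) (b - ℓ + 1) (a + ℓ - 1) :=
    (hV.mono (by omega) (by omega)).of_insertIdx_across (by omega) (by omega)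
  have hupper : b + 2 ≤ a + 2 * ℓ := by
    by_contra! hb'
    exact hW.not_hasPeriodOn (by omega) (by omega) (hV.of_insertIdx_before (by omega))
  refine ⟨?_, hupper, (hV.mono le_rfl (by omega)).of_insertIdx_before (by omega), hright, ?_⟩
  · by_contra! hb'
    exact hW.not_hasPeriodOn (s := a) (by omega) (by omega) (hright.mono (by omega) (by omega))
  · have := hV (b - ℓ) (by omega) (by omega)
    rwa [List.getElem?_insertIdx_of_lt (by omega), Nat.sub_add_cancel (by omega),
      List.getElem?_insertIdx_self, if_pos hb] at this

end SquareCompleting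

theorem scSign_eq_scSign_iff {a ℓ b a' ℓ' b' : ℕ} :
    scSign a ℓ b = scSign a' ℓ' b' ↔ (b + 2 ≤ a + ℓ ↔ b' + 2 ≤ a' + ℓ') := by
  by_cases h : b + 2 ≤ a + ℓ <;> by_cases h' : b' + 2 ≤ a' + ℓ' <;> simp [scSign, h, h']

/-- The inserted letter is the first (`b + 1 = a`) or the last letter of the completed square. -/
def IsEndInsertion (a ℓ b : ℕ) : Prop :=
  b + 1 = a ∨ b + 2 = a + 2 * ℓ

section Pairs

variable {W : List α} {a a' ℓ ℓ' b b' : ℕ} {c c' : α}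

theorem SquareCompleting.exists_split_periods (hW : SquareFree W)
    (hq : SquareCompleting W a ℓ b c) (hℓ : 2 ≤ ℓ) :
    ∃ β p₁ p₂, ℓ - 1 ≤ min p₁ p₂ ∧ max p₁ p₂ ≤ ℓ ∧
      HasPeriodOn W p₁ (a - 1) β ∧ HasPeriodOn W p₂ (β + 1) (a + ℓ - 2) := by
  by_cases hσ : b + 2 ≤ a + ℓ
  · obtain ⟨-, hleft, hright, -⟩ := hq.pos_profile hW hℓ hσ
    exact ⟨b, ℓ - 1, ℓ, by omega, by omega, hleft, hright.mono (by omega) le_rfl⟩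
  · obtain ⟨-, -, hleft, hright, -⟩ := hq.neg_profile hW hℓ (by omega)
    exact ⟨b - ℓ, ℓ, ℓ - 1, by omega, by omega, hleft, hright.mono le_rfl (by omega)⟩

theorem SquareCompleting.length_le_add_one (hW : SquareFree W)
    (hq : SquareCompleting W a ℓ b c) (hq' : SquareCompleting W a' ℓ' b' c') (hℓ : 2 ≤ ℓ)
    {d : ℕ} (ha : a ≤ a' + d) (ha' : a' ≤ a + d) (hd : 3 * (ℓ' - ℓ) + d + 6 ≤ ℓ) :
    ℓ' ≤ ℓ + 1 := by
  by_contra! hℓℓ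
  obtain ⟨β, p₁, p₂, hlo, hhi, h₁, h₂⟩ := hq.exists_split_periods hW hℓ
  obtain ⟨β', p₁', p₂', hlo', hhi', h₁', h₂'⟩ := hq'.exists_split_periods hW (by omega)
  have ha₁ : 1 ≤ a := hq.1
  have ha₁' : 1 ≤ a' := hq'.1
  have hlen : a + 2 * ℓ ≤ W.length + 2 := hq.2.2.2.2.1
  exact hW.false_of_split_periods (s := max (a - 1) (a' - 1)) (e := min (a + ℓ - 2) (a' + ℓ' - 2))
    (h₁.mono (le_max_left _ _) le_rfl) (h₂.mono le_rfl (min_le_left _ _))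
    (h₁'.mono (le_max_right _ _) le_rfl) (h₂'.mono le_rfl (min_le_right _ _))
    (by omega) (by omega) (by omega)

theorem SquareCompleting.letter_eq (hW : SquareFree W) (hq : SquareCompleting W a ℓ b c)
    (hq' : SquareCompleting W a' ℓ b c') (hℓ : 2 ≤ ℓ) (hσ : scSign a ℓ b = scSign a' ℓ b) :
    c = c' := by
  rw [scSign_eq_scSign_iff] at hσ
  by_cases h : b + 2 ≤ a + ℓ
  · exact Option.some.inj
      ((hq.pos_profile hW hℓ h).2.2.2.symm.trans (hq'.pos_profile hW hℓ (hσ.1 h)).2.2.2)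
  · have h' := mt hσ.2 h
    exact Option.some.inj ((hq.neg_profile hW hℓ (by omega)).2.2.2.2.symm.trans
      (hq'.neg_profile hW hℓ (by omega)).2.2.2.2)

theorem SquareCompleting.hasPeriodOn_of_isEndInsertion (hW : SquareFree W)
    (hq : SquareCompleting W a ℓ b c) (hℓ : 2 ≤ ℓ) (hend : IsEndInsertion a ℓ b) :
    HasPeriodOn W ℓ (a - 1) (a + ℓ - 2) := by
  rcases hend with hend | hend
  · exact (hq.pos_profile hW hℓ (by omega)).2.2.1.mono (by omega) le_rfl
  · exact (hq.neg_profile hW hℓ (by omega)).2.2.1.mono le_rfl (by omega)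

/-- Two overlapping runs of period `ℓ` and length `ℓ - 1` would glue to a run of length `ℓ`, so both
squares start at the same position. -/
theorem SquareCompleting.eq_of_isEndInsertion (hW : SquareFree W)
    (hq : SquareCompleting W a ℓ b c) (hq' : SquareCompleting W a' ℓ b' c') (hℓ : 2 ≤ ℓ)
    (hσ : scSign a ℓ b = scSign a' ℓ b') (hend : IsEndInsertion a ℓ b)
    (hend' : IsEndInsertion a' ℓ b') (ha : a' + 2 ≤ a + ℓ) (ha' : a + 2 ≤ a' + ℓ) : b = b' := by
  wlog haa : a ≤ a' generalizing a a' b b' c c'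
  · exact (this hq' hq hσ.symm hend' hend ha' ha (by omega)).symm
  have hp := hq.hasPeriodOn_of_isEndInsertion hW hℓ hend
  have hp' := hq'.hasPeriodOn_of_isEndInsertion hW hℓ hend'
  have ha₁ : 1 ≤ a := hq.1
  have hlen : a + 2 * ℓ ≤ W.length + 2 := hq.2.2.2.2.1
  obtain rfl : a = a' := by
    by_contra hne
    refine hW.not_hasPeriodOn (p := ℓ) (s := a - 1) (by omega) (by omega) fun i hi hi' => ?_
    by_cases hi'' : i < a + ℓ - 2
    · exact hp i hi hi''
    · exact hp' i (by omega) (by omega)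
  unfold IsEndInsertion at hend hend'
  rw [scSign_eq_scSign_iff] at hσ
  omega

theorem SquareCompleting.le_add_one_of_not_isEndInsertion (hW : SquareFree W)
    (hq : SquareCompleting W a ℓ b c) (hq' : SquareCompleting W a' ℓ b' c') (hℓ : 2 ≤ ℓ)
    (hσ : scSign a ℓ b = scSign a' ℓ b') (hend : ¬ IsEndInsertion a ℓ b)
    (hend' : ¬ IsEndInsertion a' ℓ b') (ha : a' + 2 ≤ a + ℓ) : b' ≤ b + 1 := by
  by_contra! hbb
  have ha₁ : 1 ≤ a := hq.1
  have hlen : a + 2 * ℓ ≤ W.length + 2 := hq.2.2.2.2.1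
  have ha₁' : 1 ≤ a' := hq'.1
  have hab' : a' ≤ b' + 1 := hq'.2.2.1
  unfold IsEndInsertion at hend hend'
  rw [scSign_eq_scSign_iff] at hσ
  by_cases h : b + 2 ≤ a + ℓ
  · obtain ⟨hb, -, hright, -⟩ := hq.pos_profile hW hℓ h
    obtain ⟨-, hleft', -, -⟩ := hq'.pos_profile hW hℓ (hσ.1 h)
    exact hW.not_hasPeriodOn_of_hasPeriodOn (s := max b (a' - 1))
      (hleft'.mono (by omega) (by omega)) (by omega) le_rfl (by omega)
      (hright.mono (by omega) (by omega))
  · have h' := mt hσ.2 h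
    obtain ⟨-, hb, -, hright, -⟩ := hq.neg_profile hW hℓ (by omega)
    obtain ⟨hb', -, hleft', -, -⟩ := hq'.neg_profile hW hℓ (by omega)
    exact hW.not_hasPeriodOn_of_hasPeriodOn (s := max (b - ℓ + 1) (a' - 1))
      (hright.mono (by omega) (by omega)) (by omega) le_rfl (by omega)
      (hleft'.mono (by omega) (by omega))

end Pairs

theorem SquareFree.card_le_six_of_squareCompleting {W : List α} (hW : SquareFree W)
    {B : Finset (ℕ × ℕ × ℕ × α)} (hB : ∀ q ∈ B, SquareCompleting W q.1 q.2.1 q.2.2.1 q.2.2.2)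
    (hbc : ∀ q ∈ B, ∀ q' ∈ B, q.2.2.1 = q'.2.2.1 → q.2.2.2 = q'.2.2.2 → q = q') {d : ℕ}
    (hclose : ∀ q ∈ B, ∀ q' ∈ B, q'.1 ≤ q.1 + d ∧ 3 * (q'.2.1 - q.2.1) + d + 6 ≤ q.2.1)
    (hσ : ∀ q ∈ B, ∀ q' ∈ B, scSign q.1 q.2.1 q.2.2.1 = scSign q'.1 q'.2.1 q'.2.2.1) :
    B.card ≤ 6 := by
  have hℓ : ∀ q ∈ B, 2 ≤ q.2.1 := fun q hq => by
    have := (hclose q hq q hq).2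
    omega
  have ha : ∀ q ∈ B, ∀ q' ∈ B, q'.1 + 2 ≤ q.1 + q.2.1 := fun q hq q' hq' => by
    have := hclose q hq q' hq'
    omega
  refine Finset.card_le_six_of_levels B (·.2.1) (·.2.2.1)
    (fun q => IsEndInsertion q.1 q.2.1 q.2.2.1) ?_ ?_ ?_ ?_
  · intro q hq q' hq'
    exact (hB q hq).length_le_add_one hW (hB q' hq') (hℓ q hq) (hclose q' hq' q hq).1
      (hclose q hq q' hq').1 (hclose q hq q' hq').2
  · rintro ⟨a, ℓ, b, c⟩ hq ⟨a', ℓ', b', c'⟩ hq' (rfl : ℓ = ℓ') (rfl : b = b')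
    exact hbc _ hq _ hq' rfl ((hB _ hq).letter_eq hW (hB _ hq') (hℓ _ hq) (hσ _ hq _ hq'))
  · rintro ⟨a, ℓ, b, c⟩ hq ⟨a', ℓ', b', c'⟩ hq' (rfl : ℓ = ℓ') hend hend'
    exact (hB _ hq).eq_of_isEndInsertion hW (hB _ hq') (hℓ _ hq)
      (hσ _ hq _ hq') hend hend' (ha _ hq _ hq') (ha _ hq' _ hq)
  · rintro ⟨a, ℓ, b, c⟩ hq ⟨a', ℓ', b', c'⟩ hq' (rfl : ℓ = ℓ') hend hend'
    exact (hB _ hq).le_add_one_of_not_isEndInsertion hW (hB _ hq')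
      (hℓ _ hq) (hσ _ hq _ hq') hend hend' (ha _ hq _ hq')

end SquareCompletion

theorem count_square_completing_small_window_general {α : Type*} (W : List α) (hW : SquareFree W)
    (L : ℕ) (hL : 300 ≤ L) (x : ℤ)
    (B : Finset (ℕ × ℕ × ℕ × α))
    (hB : ∀ q ∈ B, SquareCompleting W q.1 q.2.1 q.2.2.1 q.2.2.2)
    (hbc : ∀ q ∈ B, ∀ q' ∈ B, q.2.2.1 = q'.2.2.1 → q.2.2.2 = q'.2.2.2 → q = q')
    (hlen : ∀ q ∈ B, L ≤ q.2.1 ∧ (q.2.1 : ℝ) < 7 * L / 6)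
    (hstart : ∀ q ∈ B, (x : ℝ) ≤ (q.1 : ℝ) ∧ (q.1 : ℝ) < (x : ℝ) + L / 6)
    (hsign : (∀ q ∈ B, scSign q.1 q.2.1 q.2.2.1 = 1) ∨
             (∀ q ∈ B, scSign q.1 q.2.1 q.2.2.1 = -1)) :
    B.card ≤ 7 := by
  have hclose : ∀ q ∈ B, ∀ q' ∈ B,
      q'.1 ≤ q.1 + L / 6 ∧ 3 * (q'.2.1 - q.2.1) + L / 6 + 6 ≤ q.2.1 := by
    intro q hq q' hq'
    have hℓ := (hlen q hq).1
    have hℓ' : 6 * q'.2.1 < 7 * L := by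
      have := (hlen q' hq').2
      exact_mod_cast (by push_cast; linarith : ((6 * q'.2.1 : ℕ) : ℝ) < (7 * L : ℕ))
    have ha : 6 * q'.1 < 6 * q.1 + L := by
      have := (hstart q hq).1
      have := (hstart q' hq').2
      exact_mod_cast (by push_cast; linarith : ((6 * q'.1 : ℕ) : ℝ) < (6 * q.1 + L : ℕ))
    omega
  have hσ : ∀ q ∈ B, ∀ q' ∈ B, scSign q.1 q.2.1 q.2.2.1 = scSign q'.1 q'.2.1 q'.2.2.1 := by
    rcases hsign with h | h <;> exact fun q hq q' hq' => (h q hq).trans (h q' hq').symm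
  exact (hW.card_le_six_of_squareCompleting hB hbc hclose hσ).trans (by norm_num)

/-- In an `n`-letter square-free word, a family of square-completing quadruples, no two of
which share the same pair `(b, c)`, all of the same sign, with length parameters in
`[L, 7L/6)` for some `L ≥ 300` and starting indices in `[x, x + L/6)`, has at most 7
elements. -/
theorem count_square_completing_small_window {α : Type*} (W : List α) (n : ℕ)
    (hn : W.length = n) (hW : SquareFree W)
    (L : ℕ) (hL : 300 ≤ L) (x : ℤ)
    (B : Finset (ℕ × ℕ × ℕ × α))
    (hB : ∀ q ∈ B, SquareCompleting W q.1 q.2.1 q.2.2.1 q.2.2.2)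
    (hbc : ∀ q ∈ B, ∀ q' ∈ B, q.2.2.1 = q'.2.2.1 → q.2.2.2 = q'.2.2.2 → q = q')
    (hlen : ∀ q ∈ B, L ≤ q.2.1 ∧ (q.2.1 : ℝ) < 7 * L / 6)
    (hstart : ∀ q ∈ B, (x : ℝ) ≤ (q.1 : ℝ) ∧ (q.1 : ℝ) < (x : ℝ) + L / 6)
    (hsign : (∀ q ∈ B, scSign q.1 q.2.1 q.2.2.1 = 1) ∨
             (∀ q ∈ B, scSign q.1 q.2.1 q.2.2.1 = -1)) :
    B.card ≤ 7 :=
  count_square_completing_small_window_general W hW L hL x B hB hbc hlen hstart hsign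
end

section
/- Let W be an n-letter square-free word and let 𝒜 be a set of square-completing quadruples (a, ℓ, b, c) in W such that no two elements of 𝒜 share the same pair (b, c). For an integer ℓ ≥ 2, let 𝒜_ℓ denote the set of quadruples in 𝒜 whose length parameter equals ℓ. Then for any integer L ≥ 300, the sum over ℓ with L ≤ ℓ ≤ 2L − 1 of |𝒜_ℓ| is at most 320n / L. -/
/-!
A square-completing quadruple `(a, ℓ, b, c)` whose inserted letter falls in the first half of the
square makes `W` periodic with period `ℓ` just right of gap `b` and with period `ℓ - 1` just left
of it, and `c` is the letter at position `b + ℓ`; the quadruples whose letter falls in the second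
half become of this kind when `W` is read backwards. Take two such patterns with lengths in
`[L, 2L)`, gaps less than `L / 5` apart, and both long on the same side of their gaps.
Square-freeness forces either equal lengths and gaps at distance at most `1`, or lengths at least
`3L / 20` apart: otherwise the two nearby periods combine into a short square. So every window of
`L / 5` consecutive gaps carries, on each side, at most `7` lengths with `2` gaps each, and there
are about `5n / L` windows.
-/

open Finset

section

variable {α : Type*}

/-- The letter at position `i` of `W`, letters being numbered from `1`; positions are integers so
that reflections and shifts of positions need no truncated subtraction. -/
def letterAt (W : List α) (i : ℤ) : Option α :=
  if 0 < i then W[(i - 1).toNat]? else none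

lemma letterAt_natCast_add_one (W : List α) (i : ℕ) : letterAt W ((i : ℤ) + 1) = W[i]? := by
  simp [letterAt]

lemma letterAt_reverse (W : List α) (i : ℤ) :
    letterAt W.reverse i = letterAt W (W.length + 1 - i) := by
  unfold letterAt
  by_cases hi : 0 < i
  · by_cases hin : i ≤ W.length
    · rw [if_pos hi, if_pos (by omega), List.getElem?_reverse (by simp; omega)]
      congr 1
      omega
    · rw [if_pos hi, if_neg (by omega), List.getElem?_eq_none (by simp; omega)]
  · rw [if_neg hi, if_pos (by omega), List.getElem?_eq_none (by omega)]

lemma letterAt_insertIdx_of_le (W : List α) {b : ℕ} (c : α) {i : ℤ} (hi : i ≤ b) :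
    letterAt (W.insertIdx b c) i = letterAt W i := by
  unfold letterAt
  split_ifs
  · exact List.getElem?_insertIdx_of_lt (by omega)
  · rfl

lemma letterAt_insertIdx_self {W : List α} {b : ℕ} (c : α) (hb : b ≤ W.length) :
    letterAt (W.insertIdx b c) (b + 1) = some c := by
  rw [letterAt_natCast_add_one, List.getElem?_insertIdx_self, if_pos hb]

lemma letterAt_insertIdx_of_lt (W : List α) {b : ℕ} (c : α) {i : ℤ} (hi : (b : ℤ) + 1 < i) :
    letterAt (W.insertIdx b c) i = letterAt W (i - 1) := by
  unfold letterAt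
  rw [if_pos (by omega), if_pos (by omega), List.getElem?_insertIdx_of_gt (by omega)]
  congr 1
  omega

lemma List.reverse_insertIdx {W : List α} {b : ℕ} (c : α) (hb : b ≤ W.length) :
    (W.insertIdx b c).reverse = W.reverse.insertIdx (W.length - b) c := by
  apply List.ext_getElem?
  intro i
  have hlen := List.length_insertIdx_of_le_length hb c
  rcases lt_or_ge i (W.length + 1) with hi | hi
  · rw [List.getElem?_reverse (by omega), List.getElem?_insertIdx, List.getElem?_insertIdx, hlen]
    simp only [List.length_reverse]
    split_ifs <;> first | omega | rfl | (rw [List.getElem?_reverse (by omega)]; congr 1; omega)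
  · have hlen' := List.length_insertIdx_of_le_length (by simp : W.length - b ≤ W.reverse.length) c
    rw [List.getElem?_eq_none (by simp only [List.length_reverse]; omega),
      List.getElem?_eq_none (by simp only [List.length_reverse] at hlen'; omega)]

lemma factor_eq_factor_iff (V : List α) {a l : ℕ} (ha : 0 < a) :
    factor V a (a + l) = factor V (a + l) (a + 2 * l) ↔
      ∀ i : ℤ, a ≤ i → i < a + l → letterAt V i = letterAt V (i + l) := by
  have hlen₁ : a + l - a = l := by omega
  have hlen₂ : a + 2 * l - (a + l) = l := by omega
  simp only [factor, hlen₁, hlen₂, List.ext_getElem?_iff, List.getElem?_take,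
    List.getElem?_drop]
  constructor
  · intro h i hi hi'
    obtain ⟨k, rfl⟩ : ∃ k : ℕ, i = ((a - 1 + k : ℕ) : ℤ) + 1 := ⟨(i - a).toNat, by omega⟩
    have := h k
    rw [if_pos (by omega), if_pos (by omega)] at this
    rw [show ((a - 1 + k : ℕ) : ℤ) + 1 + l = ((a + l - 1 + k : ℕ) : ℤ) + 1 by omega,
      letterAt_natCast_add_one, letterAt_natCast_add_one, this]
  · intro h k
    split_ifs with hk
    · have := h ((a - 1 + k : ℕ) + 1) (by omega) (by omega)
      rwa [show ((a - 1 + k : ℕ) : ℤ) + 1 + l = ((a + l - 1 + k : ℕ) : ℤ) + 1 by omega,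
        letterAt_natCast_add_one, letterAt_natCast_add_one] at this
    · rfl

namespace SquareFree

variable {W : List α}

lemma reverse (hW : SquareFree W) : SquareFree W.reverse := fun X hX hXX =>
  hW X.reverse (by simpa using hX) (by simpa using hXX.reverse)

lemma false_of_period (hW : SquareFree W) {x p : ℤ} (hx : 0 < x) (hp : 0 < p)
    (hxp : x + 2 * p ≤ W.length + 1)
    (h : ∀ i, x ≤ i → i < x + p → letterAt W i = letterAt W (i + p)) : False := by
  lift x to ℕ using hx.le
  lift p to ℕ using hp.le
  have hsq := (factor_eq_factor_iff W (by omega)).2 h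
  apply hW (factor W x (x + p))
  · rw [← List.length_pos_iff, factor, List.length_take, List.length_drop]
    omega
  · nth_rewrite 2 [hsq]
    have hsplit : factor W x (x + p) ++ factor W (x + p) (x + 2 * p) = factor W x (x + 2 * p) := by
      simp only [factor, show x + p - x = p by omega, show x + 2 * p - (x + p) = p by omega,
        show x + 2 * p - x = p + p by omega, List.take_add, List.drop_drop]
      congr 3
      omega
    rw [hsplit]
    exact ((W.drop (x - 1)).take_prefix _).isInfix.trans (W.drop_suffix _).isInfix

lemma false_of_two_periods (hW : SquareFree W) {u p d : ℤ} (hd : 0 < d) (hu : 0 < u - p - d)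
    (hud : u - p + d ≤ W.length + 1)
    (hp : ∀ k, u ≤ k → k < u + d → letterAt W (k - p) = letterAt W k)
    (hpd : ∀ k, u ≤ k → k < u + d → letterAt W (k - p - d) = letterAt W k) : False :=
  hW.false_of_period hu hd (by omega) fun i hi hi' => by
    have h₁ := hp (i + p + d) (by omega) (by omega)
    have h₂ := hpd (i + p + d) (by omega) (by omega)
    rw [show i + p + d - p = i + d by ring] at h₁
    rw [show i + p + d - p - d = i by ring] at h₂
    rw [h₁, h₂]

end SquareFree

/-- `W` has period `l` on the `rho` letters right of gap `g` and period `l - 1` on the `lam` letters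
left of it: inserting the letter at position `g + l` into gap `g` creates a square of period `l`
whose first half has `lam` letters before the gap and `rho` after it. -/
structure NearSquare (W : List α) (g l lam rho : ℤ) : Prop where
  left_nonneg : 0 ≤ lam
  right_pos : 0 < rho
  left_add_right : lam + rho = l - 1
  left_le : lam ≤ g
  add_right_le : g + l + rho ≤ W.length
  right : ∀ i, g < i → i ≤ g + rho → letterAt W i = letterAt W (i + l)
  left : ∀ i, g - lam < i → i ≤ g → letterAt W i = letterAt W (i + (l - 1))

def Separated (L : ℤ) (p q : ℤ × ℤ) : Prop :=
  (p.2 = q.2 → |p.1 - q.1| ≤ 1) ∧ (p.2 ≠ q.2 → 3 * L ≤ 20 * |p.2 - q.2|)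

namespace NearSquare

variable {W : List α} {g l lam rho g' l' lam' rho' : ℤ}

lemma sub_ne_add (hW : SquareFree W) (P : NearSquare W g l lam rho)
    (P' : NearSquare W g' l lam' rho') {x y : ℤ} (hx : 0 < x) (hxr : x ≤ rho) (hy : 0 < y)
    (hyl : y ≤ lam') : g' - g ≠ x + y := by
  intro h
  obtain ⟨hlam, hrho, hsum, hg, hn, right, -⟩ := P
  obtain ⟨hlam', hrho', hsum', hg', hn', -, left'⟩ := P'
  refine hW.false_of_period (x := g + x) (p := 1) (by omega) one_pos (by omega) fun i hi hi' => ?_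
  obtain rfl : i = g + x := by omega
  rw [right _ (by omega) (by omega), left' (g + x + 1) (by omega) (by omega)]
  ring_nf

lemma add_right_lt (hW : SquareFree W) (P : NearSquare W g l lam rho)
    (P' : NearSquare W g' l lam' rho') (h : g' - g ≤ rho) : g' - g + rho' < l := by
  by_contra! hl
  obtain ⟨hlam, hrho, hsum, hg, hn, right, -⟩ := P
  obtain ⟨hlam', hrho', hsum', hg', hn', right', -⟩ := P'
  refine hW.false_of_period (x := g + 1) (p := l) (by omega) (by omega) (by omega) fun i hi hi' => ?_
  rcases le_or_gt i (g + rho) with hi'' | hi''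
  · exact right i (by omega) hi''
  · exact right' i (by omega) (by omega)

lemma eq_of_right (hW : SquareFree W) (P : NearSquare W g l lam rho)
    (P' : NearSquare W g' l' lam' rho') (h : 2 * |l - l'| + |g - g'| ≤ rho)
    (h' : 2 * |l - l'| + |g - g'| ≤ rho') : l = l' := by
  wlog hlt : l < l' generalizing g l lam rho g' l' lam' rho'
  · rcases (not_lt.1 hlt).lt_or_eq with hgt | heq
    · rw [abs_sub_comm l, abs_sub_comm g] at h h'
      exact (this P' P h' h hgt).symm
    · exact heq.symm
  exfalso
  obtain ⟨hlam, hrho, hsum, hg, hn, right, -⟩ := P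
  obtain ⟨hlam', hrho', hsum', hg', hn', right', -⟩ := P'
  have := le_abs_self (g - g')
  have := neg_abs_le (g - g')
  rw [abs_of_neg (by omega : l - l' < 0)] at h h'
  -- for `k ∈ [u, u + l' - l)`, `k - l` and `k - l'` lie in the right arms of `P` and `P'`
  refine hW.false_of_two_periods (u := g + l + max 1 (1 + (g' + l' - (g + l)))) (p := l)
    (d := l' - l) (by omega) (by omega) (by omega) (fun k hk hk' => ?_) (fun k hk hk' => ?_)
  · simpa using right (k - l) (by omega) (by omega)
  · rw [show k - l - (l' - l) = k - l' by ring]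
    simpa using right' (k - l') (by omega) (by omega)

lemma eq_of_left (hW : SquareFree W) (P : NearSquare W g l lam rho)
    (P' : NearSquare W g' l' lam' rho') (h : 2 * |l - l'| + |g - g'| ≤ lam)
    (h' : 2 * |l - l'| + |g - g'| ≤ lam') : l = l' := by
  wlog hlt : l < l' generalizing g l lam rho g' l' lam' rho'
  · rcases (not_lt.1 hlt).lt_or_eq with hgt | heq
    · rw [abs_sub_comm l, abs_sub_comm g] at h h'
      exact (this P' P h' h hgt).symm
    · exact heq.symm
  exfalso
  obtain ⟨hlam, hrho, hsum, hg, hn, -, left⟩ := P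
  obtain ⟨hlam', hrho', hsum', hg', hn', -, left'⟩ := P'
  have := le_abs_self (g - g')
  have := neg_abs_le (g - g')
  rw [abs_of_neg (by omega : l - l' < 0)] at h h'
  refine hW.false_of_two_periods (u := g + l - (l' - l) + min 0 (g' + l' - (g + l))) (p := l - 1)
    (d := l' - l) (by omega) (by omega) (by omega) (fun k hk hk' => ?_) (fun k hk hk' => ?_)
  · simpa using left (k - (l - 1)) (by omega) (by omega)
  · rw [show k - (l - 1) - (l' - l) = k - (l' - 1) by ring]
    simpa using left' (k - (l' - 1)) (by omega) (by omega)

lemma abs_sub_le_one_of_left (hW : SquareFree W) (P : NearSquare W g l lam rho)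
    (P' : NearSquare W g' l lam' rho') (h : |g - g'| ≤ lam + 1) (h' : |g - g'| ≤ lam' + 1) :
    |g - g'| ≤ 1 := by
  wlog hle : g ≤ g' generalizing g lam rho g' lam' rho'
  · rw [abs_sub_comm] at h h' ⊢
    exact this P' P h' h (by omega)
  rw [abs_of_nonpos (by omega)] at h h' ⊢
  by_contra! hfar
  exact P.sub_ne_add hW P' one_pos P.right_pos (y := g' - g - 1) (by omega) (by omega) (by ring)

lemma abs_sub_le_one_of_right (hW : SquareFree W) (P : NearSquare W g l lam rho)
    (P' : NearSquare W g' l lam' rho') (h : |g - g'| ≤ rho) (h' : |g - g'| ≤ rho') :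
    |g - g'| ≤ 1 := by
  wlog hle : g ≤ g' generalizing g lam rho g' lam' rho'
  · rw [abs_sub_comm] at h h' ⊢
    exact this P' P h' h (by omega)
  rw [abs_of_nonpos (by omega)] at h h' ⊢
  by_contra! hfar
  rcases P'.left_nonneg.lt_or_eq with hlam' | hlam'
  · exact P.sub_ne_add hW P' (x := g' - g - 1) (by omega) (by omega) one_pos (by omega) (by ring)
  · have := P.add_right_lt hW P' (by omega)
    have := P'.left_add_right
    omega

lemma separated_of_left (hW : SquareFree W) (P : NearSquare W g l lam rho)
    (P' : NearSquare W g' l' lam' rho') {L : ℤ} (hl : L ≤ l) (hl' : L ≤ l')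
    (hlam : l ≤ 2 * lam + 1) (hlam' : l' ≤ 2 * lam' + 1) (hg : 5 * |g - g'| < L) :
    Separated L (g, l) (g', l') := by
  have := abs_nonneg (g - g')
  refine ⟨fun hll => ?_, fun hll => ?_⟩ <;> dsimp only at hll ⊢
  · obtain rfl : l = l' := hll
    exact P.abs_sub_le_one_of_left hW P' (by omega) (by omega)
  · by_contra! hclose
    exact hll (P.eq_of_left hW P' (by omega) (by omega))

lemma separated_of_right (hW : SquareFree W) (P : NearSquare W g l lam rho)
    (P' : NearSquare W g' l' lam' rho') {L : ℤ} (hl : L ≤ l) (hl' : L ≤ l')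
    (hrho : l ≤ 2 * rho + 1) (hrho' : l' ≤ 2 * rho' + 1) (hg : 5 * |g - g'| < L) :
    Separated L (g, l) (g', l') := by
  have := abs_nonneg (g - g')
  refine ⟨fun hll => ?_, fun hll => ?_⟩ <;> dsimp only at hll ⊢
  · obtain rfl : l = l' := hll
    exact P.abs_sub_le_one_of_right hW P' (by omega) (by omega)
  · by_contra! hclose
    exact hll (P.eq_of_right hW P' (by omega) (by omega))

end NearSquare

lemma abs_sub_lt_of_ediv_eq {a b D : ℤ} (hD : 0 < D) (h : a / D = b / D) : |a - b| < D := by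
  have ha := Int.mul_ediv_add_emod a D
  have hb := Int.mul_ediv_add_emod b D
  have := Int.emod_nonneg a hD.ne'
  have := Int.emod_nonneg b hD.ne'
  have := Int.emod_lt_of_pos a hD
  have := Int.emod_lt_of_pos b hD
  rw [h] at ha
  rw [abs_lt]
  constructor <;> linarith

lemma card_le_two_of_abs_sub_le_one (S : Finset ℤ) (h : ∀ a ∈ S, ∀ b ∈ S, |a - b| ≤ 1) :
    #S ≤ 2 := by
  by_contra! hS
  obtain ⟨a, ha, b, hb, c, hc, hab, hac, hbc⟩ := Finset.two_lt_card.1 hS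
  have := abs_le.1 (h a ha b hb)
  have := abs_le.1 (h a ha c hc)
  have := abs_le.1 (h b hb c hc)
  omega

lemma card_le_seven_of_separated {L : ℤ} (hL : 0 < L) (S : Finset ℤ)
    (hS : ∀ x ∈ S, L ≤ x ∧ x < 2 * L) (h : ∀ x ∈ S, ∀ y ∈ S, x ≠ y → 3 * L ≤ 20 * |x - y|) :
    #S ≤ 7 := by
  -- cut `[L, 2L)` into seven windows of length `3L/20`
  have hmaps : ∀ x ∈ S, 20 * (x - L) / (3 * L) ∈ Icc (0 : ℤ) 6 := fun x hx => by
    have := hS x hx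
    exact mem_Icc.2 ⟨Int.ediv_nonneg (by omega) (by omega),
      Int.lt_add_one_iff.1 ((Int.ediv_lt_iff_lt_mul (by omega)).2 (by omega))⟩
  have hinj : Set.InjOn (fun x => 20 * (x - L) / (3 * L)) S := fun x hx y hy hxy => by
    by_contra hne
    have := abs_sub_lt_of_ediv_eq (by omega) hxy
    rw [← mul_sub, sub_sub_sub_cancel_right, abs_mul, abs_of_pos (by norm_num : (0 : ℤ) < 20)]
      at this
    exact (h x hx y hy hne).not_gt this
  simpa using card_le_card_of_injOn _ hmaps hinj

lemma card_le_fourteen_of_separated {L : ℤ} (hL : 0 < L) (T : Finset (ℤ × ℤ))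
    (hT : ∀ p ∈ T, L ≤ p.2 ∧ p.2 < 2 * L) (h : ∀ p ∈ T, ∀ q ∈ T, Separated L p q) :
    #T ≤ 14 := by
  have hfiber : ∀ l ∈ T.image Prod.snd, #{p ∈ T | p.2 = l} ≤ 2 := fun l _ => by
    rw [← card_image_of_injOn (f := Prod.fst) fun p hp q hq hpq =>
      Prod.ext hpq ((mem_filter.1 hp).2.trans (mem_filter.1 hq).2.symm)]
    refine card_le_two_of_abs_sub_le_one _ ?_
    simp only [mem_image, mem_filter]
    rintro _ ⟨p, ⟨hp, rfl⟩, rfl⟩ _ ⟨q, ⟨hq, hpq⟩, rfl⟩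
    exact (h p hp q hq).1 hpq.symm
  have hlengths : #(T.image Prod.snd) ≤ 7 := by
    refine card_le_seven_of_separated hL _ ?_ ?_ <;> simp only [mem_image]
    · rintro _ ⟨p, hp, rfl⟩
      exact hT p hp
    · rintro _ ⟨p, hp, rfl⟩ _ ⟨q, hq, rfl⟩
      exact (h p hp q hq).2
  calc #T ≤ 2 * #(T.image Prod.snd) := card_le_mul_card_image T 2 hfiber
    _ ≤ 14 := by omega

lemma card_le_of_separated_of_abs_sub_lt {L D N : ℤ} (hL : 0 < L) (hD : 0 < D)
    (T : Finset (ℤ × ℤ)) (hT : ∀ p ∈ T, 0 ≤ p.1 ∧ p.1 ≤ N ∧ L ≤ p.2 ∧ p.2 < 2 * L)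
    (h : ∀ p ∈ T, ∀ q ∈ T, |p.1 - q.1| < D → Separated L p q) :
    #T ≤ 14 * (N / D + 1).toNat := by
  have hbucket : ∀ k ∈ T.image (·.1 / D), #{p ∈ T | p.1 / D = k} ≤ 14 := fun k _ =>
    card_le_fourteen_of_separated hL _ (fun p hp => (hT p (mem_filter.1 hp).1).2.2)
      fun p hp q hq => h p (mem_filter.1 hp).1 q (mem_filter.1 hq).1
        (abs_sub_lt_of_ediv_eq hD ((mem_filter.1 hp).2.trans (mem_filter.1 hq).2.symm))
  have hrange : T.image (·.1 / D) ⊆ Icc 0 (N / D) := by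
    simp only [subset_iff, mem_image, mem_Icc]
    rintro _ ⟨p, hp, rfl⟩
    have := hT p hp
    exact ⟨Int.ediv_nonneg (by omega) hD.le, Int.ediv_le_ediv hD (by omega)⟩
  calc #T ≤ 14 * #(T.image (·.1 / D)) := card_le_mul_card_image T 14 hbucket
    _ ≤ 14 * #(Icc 0 (N / D)) := by gcongr
    _ = 14 * (N / D + 1).toNat := by rw [Int.card_Icc, sub_zero]

lemma mul_card_buckets_le {n L : ℤ} (hn : 0 ≤ n) (hL : 300 ≤ L) :
    28 * (((n - L - 1) / (L / 5) + 1).toNat : ℤ) * L ≤ 160 * n := by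
  set D := L / 5
  set Q := (n - L - 1) / D
  have hD : 60 ≤ D ∧ L ≤ 5 * D + 4 := by omega
  rcases lt_or_ge (n - L - 1) 0 with hneg | hnonneg
  · have : Q < 0 := Int.ediv_neg_of_neg_of_pos hneg (by omega)
    rw [Int.toNat_of_nonpos (by omega)]
    omega
  · have hQ : 0 ≤ Q := Int.ediv_nonneg hnonneg (by omega)
    have hDQ : D * Q ≤ n - L - 1 := Int.mul_ediv_self_le (by omega)
    have h₁ : (Q + 1) * L ≤ (Q + 1) * (5 * D + 4) := mul_le_mul_of_nonneg_left hD.2 (by omega)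
    have h₂ : 60 * Q ≤ D * Q := mul_le_mul_of_nonneg_right hD.1 hQ
    rw [Int.toNat_of_nonneg (by omega)]
    nlinarith

namespace NearSquare

variable {W : List α}

theorem card_mul_le (hW : SquareFree W) {L : ℤ} (hL : 300 ≤ L) (S : Finset (ℤ × ℤ))
    (hS : ∀ p ∈ S, L ≤ p.2 ∧ p.2 < 2 * L ∧ ∃ lam rho, NearSquare W p.1 p.2 lam rho) :
    #S * L ≤ 160 * (W.length : ℤ) := by
  classical
  set heavyLeft := fun p : ℤ × ℤ => ∃ lam rho, NearSquare W p.1 p.2 lam rho ∧ p.2 ≤ 2 * lam + 1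
  set heavyRight := fun p : ℤ × ℤ => ∃ lam rho, NearSquare W p.1 p.2 lam rho ∧ p.2 ≤ 2 * rho + 1
  have hcover : #S ≤ #(S.filter heavyLeft) + #(S.filter heavyRight) := by
    refine (card_le_card fun p hp => ?_).trans (card_union_le _ _)
    obtain ⟨-, -, lam, rho, P⟩ := hS p hp
    have := P.left_add_right
    by_cases hp' : p.2 ≤ 2 * lam + 1
    · exact mem_union_left _ (mem_filter.2 ⟨hp, lam, rho, P, hp'⟩)
    · exact mem_union_right _ (mem_filter.2 ⟨hp, lam, rho, P, by omega⟩)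
  have hcount : ∀ T ⊆ S, (∀ p ∈ T, ∀ q ∈ T, |p.1 - q.1| < L / 5 → Separated L p q) →
      #T ≤ 14 * ((W.length - L - 1) / (L / 5) + 1).toNat := fun T hT h =>
    card_le_of_separated_of_abs_sub_lt (by omega) (by omega) T (fun p hp => by
      obtain ⟨hl, hl', lam, rho, ⟨hlam, hrho, -, hg, hn, -, -⟩⟩ := hS p (hT hp)
      omega) h
  have hleft := hcount _ (filter_subset heavyLeft S) fun p hp q hq hpq => by
    obtain ⟨hp, lam, rho, P, hlam⟩ := mem_filter.1 hp
    obtain ⟨hq, lam', rho', Q, hlam'⟩ := mem_filter.1 hq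
    exact P.separated_of_left hW Q (hS p hp).1 (hS q hq).1 hlam hlam' (by omega)
  have hright := hcount _ (filter_subset heavyRight S) fun p hp q hq hpq => by
    obtain ⟨hp, lam, rho, P, hrho⟩ := mem_filter.1 hp
    obtain ⟨hq, lam', rho', Q, hrho'⟩ := mem_filter.1 hq
    exact P.separated_of_right hW Q (hS p hp).1 (hS q hq).1 hrho hrho' (by omega)
  have hbuckets := mul_card_buckets_le (n := W.length) (by positivity) hL
  have hS' : #S ≤ 28 * ((W.length - L - 1) / (L / 5) + 1).toNat := by omega
  have : (#S : ℤ) ≤ 28 * (((W.length - L - 1) / (L / 5) + 1).toNat : ℤ) := by exact_mod_cast hS'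
  nlinarith

end NearSquare

namespace SquareCompleting

variable {W : List α} {a l b : ℕ} {c : α}

lemma letterAt_eq (h : SquareCompleting W a l b c) (i : ℤ) (hi : a ≤ i) (hi' : i < a + l) :
    letterAt (W.insertIdx b c) i = letterAt (W.insertIdx b c) (i + l) :=
  (factor_eq_factor_iff _ h.1).1 h.2.2.2.2.2 i hi hi'

lemma add_two_le (hW : SquareFree W) (h : SquareCompleting W a l b c) : b + 2 ≤ a + 2 * l := by
  by_contra! hb
  have hsq := h.letterAt_eq
  obtain ⟨ha, hl, -, hbn, -, -⟩ := h
  refine hW.false_of_period (x := a) (p := l) (by omega) (by omega) (by omega) fun i hi hi' => ?_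
  rw [← letterAt_insertIdx_of_le W c (b := b) (by omega),
    ← letterAt_insertIdx_of_le W c (b := b) (by omega)]
  exact hsq i hi hi'

lemma reverse (hW : SquareFree W) (h : SquareCompleting W a l b c) :
    SquareCompleting W.reverse (W.length + 3 - a - 2 * l) l (W.length - b) c := by
  have hlast := h.add_two_le hW
  have hsq := h.letterAt_eq
  obtain ⟨ha, hl, hab, hb, hn, -⟩ := h
  refine ⟨by omega, hl, by omega, by simp, by simp; omega, ?_⟩
  rw [factor_eq_factor_iff _ (by omega), ← List.reverse_insertIdx c hb]
  intro i hi hi'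
  rw [letterAt_reverse, letterAt_reverse, List.length_insertIdx_of_le_length hb]
  convert (hsq (W.length + 2 - i - l) (by omega) (by omega)).symm using 2 <;> push_cast <;> ring

lemma nearSquare (hW : SquareFree W) (h : SquareCompleting W a l b c) (hl : 2 ≤ l)
    (hpos : b + 2 ≤ a + l) :
    NearSquare W b l (b - a + 1) (a + l - 2 - b) ∧ letterAt W (b + l) = some c := by
  have hsq := h.letterAt_eq
  obtain ⟨ha, -, hab, hb, hn, -⟩ := h
  -- for `b + 2 = a + l` the factor `W[a, a + 2l - 2)` would be a square
  have hgap : b + 2 ≠ a + l := fun heq => by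
    refine hW.false_of_period (x := a) (p := l - 1) (by omega) (by omega) (by omega)
      fun i hi hi' => ?_
    have := hsq i hi (by omega)
    rwa [letterAt_insertIdx_of_le W c (by omega), letterAt_insertIdx_of_lt W c (by omega),
      show i + l - 1 = i + (l - 1) by ring] at this
  refine ⟨⟨by omega, by omega, by omega, by omega, by omega, fun i hi hi' => ?_,
    fun i hi hi' => ?_⟩, ?_⟩
  · have := hsq (i + 1) (by omega) (by omega)
    rwa [letterAt_insertIdx_of_lt W c (by omega), letterAt_insertIdx_of_lt W c (by omega),
      add_sub_cancel_right, show i + 1 + l - 1 = i + l by ring] at this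
  · have := hsq i (by omega) (by omega)
    rwa [letterAt_insertIdx_of_le W c (by omega), letterAt_insertIdx_of_lt W c (by omega),
      show i + l - 1 = i + (l - 1) by ring] at this
  · have := hsq (b + 1) (by omega) (by omega)
    rw [letterAt_insertIdx_self c hb, letterAt_insertIdx_of_lt W c (by omega)] at this
    rw [this]
    ring_nf

theorem card_mul_le_of_pos (hW : SquareFree W) {A B : Finset (ℕ × ℕ × ℕ × α)}
    (hA : ∀ q ∈ A, SquareCompleting W q.1 q.2.1 q.2.2.1 q.2.2.2)
    (hbc : ∀ q ∈ A, ∀ q' ∈ A, q.2.2.1 = q'.2.2.1 → q.2.2.2 = q'.2.2.2 → q = q')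
    (hBA : B ⊆ A) {L : ℕ} (hL : 300 ≤ L)
    (hB : ∀ q ∈ B, L ≤ q.2.1 ∧ q.2.1 < 2 * L ∧ q.2.2.1 + 2 ≤ q.1 + q.2.1) :
    #B * L ≤ 160 * W.length := by
  classical
  have hnear : ∀ q ∈ B, NearSquare W q.2.2.1 q.2.1 (q.2.2.1 - q.1 + 1) (q.1 + q.2.1 - 2 - q.2.2.1)
      ∧ letterAt W (q.2.2.1 + q.2.1) = some q.2.2.2 := fun q hq => by
    have := hB q hq
    exact (hA q (hBA hq)).nearSquare hW (by omega) this.2.2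
  -- the letter `c` is read off `W` at position `b + ℓ`, so `(b, ℓ)` determines the quadruple
  set gapLength := fun q : ℕ × ℕ × ℕ × α => ((q.2.2.1 : ℤ), (q.2.1 : ℤ))
  have hinj : Set.InjOn gapLength B := fun q hq q' hq' h => by
    simp only [gapLength, Prod.mk.injEq, Nat.cast_inj] at h
    refine hbc q (hBA hq) q' (hBA hq') h.1 (Option.some_injective _ ?_)
    rw [← (hnear q hq).2, ← (hnear q' hq').2, h.1, h.2]
  have := NearSquare.card_mul_le hW (L := L) (by exact_mod_cast hL) (B.image gapLength) (by
    simp only [mem_image]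
    rintro _ ⟨q, hq, rfl⟩
    have := hB q hq
    dsimp only [gapLength]
    exact ⟨by exact_mod_cast this.1, by omega, _, _, (hnear q hq).1⟩)
  rw [card_image_of_injOn hinj] at this
  exact_mod_cast this

theorem card_mul_le_of_neg (hW : SquareFree W) {A B : Finset (ℕ × ℕ × ℕ × α)}
    (hA : ∀ q ∈ A, SquareCompleting W q.1 q.2.1 q.2.2.1 q.2.2.2)
    (hbc : ∀ q ∈ A, ∀ q' ∈ A, q.2.2.1 = q'.2.2.1 → q.2.2.2 = q'.2.2.2 → q = q')
    (hBA : B ⊆ A) {L : ℕ} (hL : 300 ≤ L)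
    (hB : ∀ q ∈ B, L ≤ q.2.1 ∧ q.2.1 < 2 * L ∧ q.1 + q.2.1 ≤ q.2.2.1 + 1) :
    #B * L ≤ 160 * W.length := by
  classical
  -- reading the word backwards swaps the two halves of every square
  set reflect := fun q : ℕ × ℕ × ℕ × α =>
    (W.length + 3 - q.1 - 2 * q.2.1, q.2.1, W.length - q.2.2.1, q.2.2.2)
  have hgap : ∀ q ∈ B, ∀ q' ∈ B, W.length - q.2.2.1 = W.length - q'.2.2.1 → q.2.2.1 = q'.2.2.1 :=
    fun q hq q' hq' h => by
      have := (hA q (hBA hq)).2.2.2.1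
      have := (hA q' (hBA hq')).2.2.2.1
      omega
  have hinj : Set.InjOn reflect B := fun q hq q' hq' h => by
    simp only [reflect, Prod.mk.injEq] at h
    exact hbc q (hBA hq) q' (hBA hq') (hgap q hq q' hq' h.2.2.1) h.2.2.2
  have := card_mul_le_of_pos hW.reverse (A := B.image reflect) (B := B.image reflect) ?_ ?_
    subset_rfl hL ?_
  · rwa [card_image_of_injOn hinj, List.length_reverse] at this
  all_goals simp only [mem_image]
  · rintro _ ⟨q, hq, rfl⟩
    exact (hA q (hBA hq)).reverse hW
  · rintro _ ⟨q, hq, rfl⟩ _ ⟨q', hq', rfl⟩ hb hc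
    exact congrArg reflect (hbc q (hBA hq) q' (hBA hq') (hgap q hq q' hq' hb) hc)
  · rintro _ ⟨q, hq, rfl⟩
    obtain ⟨hl, hl', hneg⟩ := hB q hq
    have := (hA q (hBA hq)).2.2.2.2.1
    exact ⟨hl, hl', by dsimp only [reflect]; omega⟩

end SquareCompleting

end

/-- In an `n`-letter square-free word, for a family `A` of square-completing quadruples, no
two sharing the same pair `(b, c)`, and any `L ≥ 300`, the number of quadruples whose length
parameter `ℓ` satisfies `L ≤ ℓ ≤ 2L - 1` is at most `320n / L`. -/
theorem count_square_completing_dyadic_range {α : Type*} (W : List α) (n : ℕ)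
    (hn : W.length = n) (hW : SquareFree W)
    (A : Finset (ℕ × ℕ × ℕ × α))
    (hA : ∀ q ∈ A, SquareCompleting W q.1 q.2.1 q.2.2.1 q.2.2.2)
    (hbc : ∀ q ∈ A, ∀ q' ∈ A, q.2.2.1 = q'.2.2.1 → q.2.2.2 = q'.2.2.2 → q = q')
    (L : ℕ) (hL : 300 ≤ L) :
    ((∑ ℓ ∈ Finset.Icc L (2 * L - 1),
        (A.filter (fun q => q.2.1 = ℓ)).card : ℕ) : ℝ) ≤ 320 * n / L := by
  classical
  subst hn
  rw [sum_card_fiberwise_eq_card_filter]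
  set s := A.filter fun q => q.2.1 ∈ Icc L (2 * L - 1)
  set pos := fun q : ℕ × ℕ × ℕ × α => q.2.2.1 + 2 ≤ q.1 + q.2.1
  have hs : ∀ q ∈ s, L ≤ q.2.1 ∧ q.2.1 < 2 * L := fun q hq => by
    have := mem_Icc.1 (mem_filter.1 hq).2
    omega
  have hpos := SquareCompleting.card_mul_le_of_pos hW hA hbc
    ((filter_subset pos s).trans (filter_subset _ A)) hL fun q hq => by
      obtain ⟨hq, hsign⟩ := mem_filter.1 hq
      exact ⟨(hs q hq).1, (hs q hq).2, hsign⟩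
  have hneg := SquareCompleting.card_mul_le_of_neg hW hA hbc
    ((filter_subset (¬ pos ·) s).trans (filter_subset _ A)) hL fun q hq => by
      obtain ⟨hq, hsign⟩ := mem_filter.1 hq
      exact ⟨(hs q hq).1, (hs q hq).2, by omega⟩
  have hcard : #s * L ≤ 320 * W.length := by
    rw [← card_filter_add_card_filter_not pos]
    linarith
  rw [le_div_iff₀ (by exact_mod_cast (by omega : 0 < L))]
  exact_mod_cast hcard
end
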